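/- arXiv:1905.11675 — 3 statements merged into one kernel-verified Lean document; each statement's English description precedes it below -/
import Mathlib

section
/- Assume ‖x_i‖₂ ≤ 1 for all i. There exists a constant C > 0, depending only on ℓ, such that with probability at least 1 − δ/2 over the random initialization of W₀ (i.i.d. N(0,1) entries), ‖G_{W₀} − K‖_F ≤ C n √(log(2n/δ)/M), and consequently ‖G_{W₀} − K‖₂ ≤ C n √(log(2n/δ)/M). -/
open Matrix MeasureTheory ProbabilityTheory
open scoped ENNReal

/-- Euclidean norm of a real vector. -/
noncomputable def eNorm {n : Type*} [Fintype n] (v : n → ℝ) : ℝ :=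
  Real.sqrt (∑ i, v i ^ 2)

/-- Frobenius norm of a real matrix. -/
noncomputable def frobNorm {m n : Type*} [Fintype m] [Fintype n] (A : Matrix m n ℝ) : ℝ :=
  Real.sqrt (∑ i, ∑ j, A i j ^ 2)

/-- Spectral (ℓ²-operator) norm of a real matrix. -/
noncomputable def specNorm {m n : Type*} [Fintype m] [Fintype n] [DecidableEq n]
    (A : Matrix m n ℝ) : ℝ :=
  ‖LinearMap.toContinuousLinearMap (Matrix.toEuclideanLin A)‖

/-- The Gram matrix of the neural tangent kernel of the two-layer network at parameter `W`. -/
noncomputable def gramNTK (M d n : ℕ) (σ' : ℝ → ℝ) (x : Fin n → Fin d → ℝ)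
    (W : Fin M → Fin d → ℝ) : Matrix (Fin n) (Fin n) ℝ :=
  Matrix.of fun i j => (M : ℝ)⁻¹ * ∑ r, (x i ⬝ᵥ x j) * σ' (W r ⬝ᵥ x i) * σ' (W r ⬝ᵥ x j)

/-- The NTK limit kernel matrix `K_{ij} = E_{w∼N(0,I_d)}[x_iᵀx_j σ'(w·x_i)σ'(w·x_j)]`. -/
noncomputable def ntkKernel (d n : ℕ) (σ' : ℝ → ℝ) (x : Fin n → Fin d → ℝ) :
    Matrix (Fin n) (Fin n) ℝ :=
  Matrix.of fun i j =>
    ∫ w : Fin d → ℝ, (x i ⬝ᵥ x j) * σ' (w ⬝ᵥ x i) * σ' (w ⬝ᵥ x j)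
      ∂(Measure.pi fun _ : Fin d => gaussianReal 0 1)

/-- i.i.d. standard Gaussian initialization of the first-layer weights. -/
noncomputable def gaussInit (M d : ℕ) : Measure (Fin M → Fin d → ℝ) :=
  Measure.pi fun _ => Measure.pi fun _ => gaussianReal 0 1

/-!
Each entry of `G_{W₀} - K` is the empirical mean of `M` i.i.d. copies of
`(x_i·x_j) σ'(w·x_i) σ'(w·x_j)`, a variable bounded by `ℓ²` (Cauchy–Schwarz and `‖x_i‖ ≤ 1`),
minus its expectation. Hoeffding's inequality therefore bounds one entry by
`(ℓ² + 1) √(2 log(4n²/δ) / M)` outside an event of probability `δ / (2n²)`, and a union bound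
over the `n²` entries controls all of them at once. The Frobenius norm is at most `n` times the
largest entry, and the spectral norm is at most the Frobenius norm.
-/

lemma eNorm_nonneg {n : Type*} [Fintype n] (v : n → ℝ) : 0 ≤ eNorm v := Real.sqrt_nonneg _

lemma abs_dotProduct_le_eNorm_mul_eNorm {n : Type*} [Fintype n] (u v : n → ℝ) :
    |u ⬝ᵥ v| ≤ eNorm u * eNorm v := by
  rw [eNorm, eNorm, ← Real.sqrt_mul (by positivity)]
  exact Real.abs_le_sqrt (Finset.sum_mul_sq_le_sq_mul_sq _ _ _)

lemma eNorm_mulVec_le_frobNorm_mul {m n : Type*} [Fintype m] [Fintype n]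
    (A : Matrix m n ℝ) (v : n → ℝ) : eNorm (A *ᵥ v) ≤ frobNorm A * eNorm v := by
  have hrow : ∀ i, (A *ᵥ v) i ^ 2 ≤ (∑ j, A i j ^ 2) * eNorm v ^ 2 := fun i => by
    rw [← Real.sq_sqrt (by positivity : 0 ≤ ∑ j, A i j ^ 2), ← mul_pow, ← sq_abs]
    exact pow_le_pow_left₀ (abs_nonneg _) (abs_dotProduct_le_eNorm_mul_eNorm (A i) v) 2
  calc eNorm (A *ᵥ v) ≤ Real.sqrt (∑ i, (∑ j, A i j ^ 2) * eNorm v ^ 2) :=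
        Real.sqrt_le_sqrt (Finset.sum_le_sum fun i _ => hrow i)
    _ = frobNorm A * eNorm v := by
        rw [← Finset.sum_mul, Real.sqrt_mul (by positivity),
          Real.sqrt_sq (eNorm_nonneg v), frobNorm]

lemma specNorm_le_frobNorm {m n : Type*} [Fintype m] [Fintype n] [DecidableEq n]
    (A : Matrix m n ℝ) : specNorm A ≤ frobNorm A := by
  refine ContinuousLinearMap.opNorm_le_bound _ (Real.sqrt_nonneg _) fun v => ?_
  simpa [EuclideanSpace.norm_eq, eNorm] using eNorm_mulVec_le_frobNorm_mul A (WithLp.ofLp v)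

lemma frobNorm_le_of_forall_abs_le {m n : Type*} [Fintype m] [Fintype n] {A : Matrix m n ℝ}
    {t : ℝ} (ht : 0 ≤ t) (h : ∀ i j, |A i j| ≤ t) :
    frobNorm A ≤ Real.sqrt (Fintype.card m * Fintype.card n) * t := by
  calc frobNorm A ≤ Real.sqrt (∑ _i : m, ∑ _j : n, t ^ 2) :=
        Real.sqrt_le_sqrt <| Finset.sum_le_sum fun i _ => Finset.sum_le_sum fun j _ =>
          sq_le_sq' (abs_le.mp (h i j)).1 (abs_le.mp (h i j)).2
    _ = Real.sqrt (Fintype.card m * Fintype.card n) * t := by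
        simp only [Finset.sum_const, Finset.card_univ, nsmul_eq_mul]
        rw [← mul_assoc, Real.sqrt_mul (by positivity), Real.sqrt_sq ht]

section Hoeffding

variable {α : Type*} [MeasurableSpace α] (ν : Measure α) [IsProbabilityMeasure ν]

lemma measureReal_le_sampleMean_sub_le {M : ℕ} (hM : 0 < M) {f : α → ℝ} (hf : Measurable f)
    {B : ℝ} (hB : ∀ a, |f a| ≤ B) {t : ℝ} (ht : 0 ≤ t) :
    (Measure.pi fun _ : Fin M => ν).real {W | t ≤ (M : ℝ)⁻¹ * ∑ r, f (W r) - ∫ a, f a ∂ν} ≤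
      Real.exp (-(M * t ^ 2) / (2 * B ^ 2)) := by
  set X : Fin M → (Fin M → α) → ℝ := fun r W => f (W r) - ∫ a, f a ∂ν
  have hindep : iIndepFun X (Measure.pi fun _ : Fin M => ν) :=
    iIndepFun_pi fun _ => (hf.sub_const _).aemeasurable
  have hsubG : ∀ r, HasSubgaussianMGF (X r) ((‖B - -B‖₊ / 2) ^ 2)
      (Measure.pi fun _ : Fin M => ν) := fun r => by
    refine HasSubgaussianMGF.of_map (Y := fun W : Fin M → α => W r)
      (X := fun a => f a - ∫ a, f a ∂ν) (measurable_pi_apply r).aemeasurable ?_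
    rw [(measurePreserving_eval (fun _ : Fin M => ν) r).map_eq]
    exact hasSubgaussianMGF_of_mem_Icc hf.aemeasurable (ae_of_all _ fun a => abs_le.mp (hB a))
  have hMR : (0 : ℝ) < M := Nat.cast_pos.mpr hM
  have hset : {W | t ≤ (M : ℝ)⁻¹ * ∑ r, f (W r) - ∫ a, f a ∂ν} =
      {W | M * t ≤ ∑ r ∈ Finset.univ, X r W} := by
    ext W
    simp only [Set.mem_ofPred_eq, X, Finset.sum_sub_distrib, Finset.sum_const, Finset.card_univ,
      Fintype.card_fin, nsmul_eq_mul]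
    rw [← mul_le_mul_iff_of_pos_left hMR, mul_sub, ← mul_assoc, mul_inv_cancel₀ hMR.ne', one_mul]
  rw [hset]
  refine (HasSubgaussianMGF.measure_sum_ge_le_of_iIndepFun hindep (fun r _ => hsubG r)
    (by positivity)).trans_eq ?_
  have hc : (((‖B - -B‖₊ / 2) ^ 2 : NNReal) : ℝ) = B ^ 2 := by
    simp only [NNReal.coe_pow, NNReal.coe_div, coe_nnnorm, Real.norm_eq_abs, NNReal.coe_ofNat,
      div_pow, sq_abs]
    ring
  rw [Finset.sum_const, Finset.card_univ, Fintype.card_fin, nsmul_eq_mul, NNReal.coe_mul, hc,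
    NNReal.coe_natCast]
  congr 1
  field_simp

lemma measureReal_le_abs_sampleMean_sub_le {M : ℕ} (hM : 0 < M) {f : α → ℝ}
    (hf : Measurable f) {B : ℝ} (hB : ∀ a, |f a| ≤ B) {t : ℝ} (ht : 0 ≤ t) :
    (Measure.pi fun _ : Fin M => ν).real {W | t ≤ |(M : ℝ)⁻¹ * ∑ r, f (W r) - ∫ a, f a ∂ν|} ≤
      2 * Real.exp (-(M * t ^ 2) / (2 * B ^ 2)) := by
  have hupper := measureReal_le_sampleMean_sub_le ν hM hf hB ht
  have hlower := measureReal_le_sampleMean_sub_le ν hM (f := fun a => -f a) hf.neg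
    (fun a => (abs_neg (f a)).trans_le (hB a)) ht
  have hsplit : {W : Fin M → α | t ≤ |(M : ℝ)⁻¹ * ∑ r, f (W r) - ∫ a, f a ∂ν|} ⊆
      {W | t ≤ (M : ℝ)⁻¹ * ∑ r, f (W r) - ∫ a, f a ∂ν} ∪
        {W | t ≤ (M : ℝ)⁻¹ * ∑ r, -f (W r) - ∫ a, -f a ∂ν} := fun W hW => by
    simp only [Set.mem_ofPred_eq, le_abs, neg_sub] at hW
    simpa only [Set.mem_union, Set.mem_ofPred_eq, Finset.sum_neg_distrib, integral_neg, mul_neg,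
      neg_sub_neg] using hW
  linarith [(measureReal_mono (μ := Measure.pi fun _ : Fin M => ν) hsplit).trans
    (measureReal_union_le _ _)]

end Hoeffding

lemma ofReal_one_sub_card_mul_le_measure {Ω ι : Type*} [MeasurableSpace Ω] {μ : Measure Ω}
    [IsProbabilityMeasure μ] [Fintype ι] {s : ι → Set Ω} {S : Set Ω} {p : ℝ}
    (hp : ∀ i, μ.real (s i) ≤ p) (hS : ∀ ω, (∀ i, ω ∉ s i) → ω ∈ S) :
    ENNReal.ofReal (1 - Fintype.card ι * p) ≤ μ S := by
  have hcover : Set.univ ⊆ (⋃ i, s i) ∪ S := fun ω _ => by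
    by_cases h : ∃ i, ω ∈ s i
    · exact Or.inl (Set.mem_iUnion.mpr h)
    · exact Or.inr (hS ω (not_exists.mp h))
  have hunion : μ.real (⋃ i, s i) ≤ Fintype.card ι * p := by
    simpa using (measureReal_iUnion_fintype_le s).trans (Finset.sum_le_sum fun i _ => hp i)
  rw [← ofReal_measureReal]
  refine ENNReal.ofReal_le_ofReal ?_
  have := (measureReal_mono (μ := μ) hcover).trans (measureReal_union_le _ _)
  rw [probReal_univ] at this
  linarith

lemma measurable_of_forall_hasDerivAt {σ σ' : ℝ → ℝ} (hσ : ∀ t, HasDerivAt σ (σ' t) t) :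
    Measurable σ' := by
  rw [show σ' = deriv σ from funext fun t => (hσ t).deriv.symm]
  exact measurable_deriv σ

def ntkIntegrand {ι : Type*} [Fintype ι] (σ' : ℝ → ℝ) (u v w : ι → ℝ) : ℝ :=
  (u ⬝ᵥ v) * σ' (w ⬝ᵥ u) * σ' (w ⬝ᵥ v)

section NTKIntegrand

variable {ι : Type*} [Fintype ι] {σ' : ℝ → ℝ}

lemma measurable_ntkIntegrand (hσ' : Measurable σ') (u v : ι → ℝ) :
    Measurable (ntkIntegrand σ' u v) := by
  unfold ntkIntegrand
  fun_prop

lemma abs_ntkIntegrand_le {ℓ : ℝ} (hσ' : ∀ t, |σ' t| ≤ ℓ) {u v : ι → ℝ} (hu : eNorm u ≤ 1)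
    (hv : eNorm v ≤ 1) (w : ι → ℝ) : |ntkIntegrand σ' u v w| ≤ ℓ ^ 2 := by
  have hdot : |u ⬝ᵥ v| ≤ 1 := (abs_dotProduct_le_eNorm_mul_eNorm u v).trans
    (mul_le_one₀ hu (eNorm_nonneg v) hv)
  have hℓ : 0 ≤ ℓ := (abs_nonneg _).trans (hσ' 0)
  calc |ntkIntegrand σ' u v w| = |u ⬝ᵥ v| * |σ' (w ⬝ᵥ u)| * |σ' (w ⬝ᵥ v)| := by
        rw [ntkIntegrand, abs_mul, abs_mul]
    _ ≤ 1 * ℓ * ℓ := by gcongr <;> exact hσ' _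
    _ = ℓ ^ 2 := by ring

end NTKIntegrand

lemma gramNTK_sub_ntkKernel_apply (M d n : ℕ) (σ' : ℝ → ℝ) (x : Fin n → Fin d → ℝ)
    (W : Fin M → Fin d → ℝ) (i j : Fin n) :
    (gramNTK M d n σ' x W - ntkKernel d n σ' x) i j =
      (M : ℝ)⁻¹ * ∑ r, ntkIntegrand σ' (x i) (x j) (W r) -
        ∫ w, ntkIntegrand σ' (x i) (x j) w ∂(Measure.pi fun _ : Fin d => gaussianReal 0 1) :=
  rfl

instance isProbabilityMeasure_gaussInit (M d : ℕ) : IsProbabilityMeasure (gaussInit M d) := by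
  unfold gaussInit
  infer_instance

lemma measureReal_le_abs_gramNTK_sub_ntkKernel_apply_le {M d n : ℕ} (hM : 0 < M)
    {σ' : ℝ → ℝ} (hσ'meas : Measurable σ') {ℓ : ℝ} (hσ' : ∀ t, |σ' t| ≤ ℓ)
    {x : Fin n → Fin d → ℝ} (hx : ∀ i, eNorm (x i) ≤ 1) {B : ℝ} (hB : 0 < B) (hℓB : ℓ ^ 2 ≤ B)
    {L : ℝ} (hL : 0 ≤ L) (i j : Fin n) :
    (gaussInit M d).real {W | B * Real.sqrt (2 * L / M) ≤
      |(gramNTK M d n σ' x W - ntkKernel d n σ' x) i j|} ≤ 2 * Real.exp (-L) := by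
  simp only [gramNTK_sub_ntkKernel_apply]
  refine (measureReal_le_abs_sampleMean_sub_le _ hM (measurable_ntkIntegrand hσ'meas _ _)
    (fun w => (abs_ntkIntegrand_le hσ' (hx i) (hx j) w).trans hℓB) (by positivity)).trans_eq ?_
  rw [mul_pow, Real.sq_sqrt (by positivity)]
  field_simp

lemma sqrt_two_mul_log_four_mul_sq_div_le (M n : ℕ) {δ : ℝ} (hδ0 : 0 < δ) (hδ1 : δ ≤ 1) :
    Real.sqrt (2 * Real.log (4 * n ^ 2 / δ) / M) ≤ 2 * Real.sqrt (Real.log (2 * n / δ) / M) := by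
  have hlog : Real.log (4 * n ^ 2 / δ) ≤ 2 * Real.log (2 * n / δ) := by
    rcases n.eq_zero_or_pos with rfl | hn
    · simp
    calc Real.log (4 * n ^ 2 / δ) ≤ Real.log ((2 * n / δ) ^ 2) := by
          refine Real.log_le_log (by positivity) ?_
          rw [div_pow, div_le_div_iff₀ hδ0 (by positivity)]
          nlinarith [mul_le_mul_of_nonneg_left hδ1 hδ0.le]
      _ = 2 * Real.log (2 * n / δ) := by rw [Real.log_pow]; norm_num
  calc Real.sqrt (2 * Real.log (4 * n ^ 2 / δ) / M)
      ≤ Real.sqrt (2 ^ 2 * (Real.log (2 * n / δ) / M)) := by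
        rw [← mul_div_assoc]
        exact Real.sqrt_le_sqrt (div_le_div_of_nonneg_right (by linarith) (Nat.cast_nonneg M))
    _ = 2 * Real.sqrt (Real.log (2 * n / δ) / M) := by
        rw [Real.sqrt_mul (by norm_num), Real.sqrt_sq (by norm_num)]

/-- If `‖x_i‖₂ ≤ 1` for all `i`, there is a constant `C > 0` depending only
on the derivative bound `ℓ` such that with probability at least `1 − δ/2` over the Gaussian
initialization `W₀`, `‖G_{W₀} − K‖_F ≤ C n √(log(2n/δ)/M)`, and consequently the same bound
holds for the spectral norm. -/
theorem gram_concentration_at_init (ℓ : ℝ) :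
    ∃ C : ℝ, 0 < C ∧
      ∀ (M d n : ℕ), 0 < M →
        ∀ (σ σ' : ℝ → ℝ),
          (∀ t : ℝ, HasDerivAt σ (σ' t) t) →
          (∀ t : ℝ, |σ' t| ≤ ℓ) →
        ∀ x : Fin n → Fin d → ℝ, (∀ i, eNorm (x i) ≤ 1) →
        ∀ δ : ℝ, 0 < δ → δ < 1 →
          ENNReal.ofReal (1 - δ / 2) ≤
            gaussInit M d
              {W | frobNorm (gramNTK M d n σ' x W - ntkKernel d n σ' x) ≤
                    C * n * Real.sqrt (Real.log (2 * n / δ) / M) ∧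
                  specNorm (gramNTK M d n σ' x W - ntkKernel d n σ' x) ≤
                    C * n * Real.sqrt (Real.log (2 * n / δ) / M)} := by
  -- `ℓ ^ 2 + 1` rather than `ℓ ^ 2`: Hoeffding's bound is void for a range of width `0`
  refine ⟨2 * (ℓ ^ 2 + 1), by positivity, ?_⟩
  intro M d n hM σ σ' hσ hσ' x hx δ hδ0 hδ1
  set t := (ℓ ^ 2 + 1) * Real.sqrt (2 * Real.log (4 * n ^ 2 / δ) / M)
  have hdev : ∀ ij : Fin n × Fin n, (gaussInit M d).real
      {W | t ≤ |(gramNTK M d n σ' x W - ntkKernel d n σ' x) ij.1 ij.2|} ≤ δ / (2 * n ^ 2) := by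
    rintro ⟨i, j⟩
    have hn : (1 : ℝ) ≤ n := Nat.one_le_cast.mpr i.pos
    refine (measureReal_le_abs_gramNTK_sub_ntkKernel_apply_le hM
      (measurable_of_forall_hasDerivAt hσ) hσ' hx (by positivity) (by linarith)
      (Real.log_nonneg (by rw [le_div_iff₀ hδ0]; nlinarith)) i j).trans_eq ?_
    rw [Real.exp_neg, Real.exp_log (by positivity)]
    field_simp
    ring
  refine (ofReal_one_sub_card_mul_le_measure hdev fun W hW => ?_).trans' ?_
  · have hfrob : frobNorm (gramNTK M d n σ' x W - ntkKernel d n σ' x) ≤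
        2 * (ℓ ^ 2 + 1) * n * Real.sqrt (Real.log (2 * n / δ) / M) := by
      refine (frobNorm_le_of_forall_abs_le (by positivity)
        fun i j => (not_le.mp (hW (i, j))).le).trans ?_
      rw [Fintype.card_fin, Real.sqrt_mul_self n.cast_nonneg, mul_comm _ (n : ℝ), mul_assoc]
      gcongr
      exact (mul_le_mul_of_nonneg_left (sqrt_two_mul_log_four_mul_sq_div_le M n hδ0 hδ1.le)
        (by positivity)).trans_eq (by ring)
    exact ⟨hfrob, (specNorm_le_frobNorm _).trans hfrob⟩
  · refine ENNReal.ofReal_le_ofReal ?_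
    rw [Fintype.card_prod, Fintype.card_fin, Nat.cast_mul]
    rcases n.eq_zero_or_pos with rfl | hn
    · norm_num
      positivity
    · rw [show (n : ℝ) * n * (δ / (2 * n ^ 2)) = δ / 2 by field_simp]
end

section
/- Let G ∈ ℝ^{n×n} be symmetric positive definite with λ_min(G) ≥ m > 0, and fix a partition of {1,…,n} into k consecutive blocks of size b (n = bk). Let D be the block-diagonal part of G (the diagonal b×b blocks of G) and let −L be the strictly block-lower-triangular part, so G = D − L − L^T. Then D − L is invertible, and every eigenvalue λ ∈ ℂ of A = L^T (D − L)^{-1} satisfies |λ| ≤ ‖L‖₂ / √(‖L‖₂² + m²). In particular, the spectral radius ρ(A) < 1, and if additionally every entry of G has absolute value at most a constant C₀ (so ‖L‖₂ ≤ C₀ n), then ρ(A) ≤ 1 − c m²/n² for a constant c > 0 depending only on C₀. -/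
/-!
If `μ` is an eigenvalue of `Lᵀ (D - L)⁻¹`, then `Lᵀ z = μ (D - L) z` for a complex `z ≠ 0`.
Pairing with `z` gives `conj α = μ (d - α)`, where `α = z* L z` and `d = z* D z` is real.
Coercivity of `D` and of `G = D - L - Lᵀ` gives `d ≥ m‖z‖²` and `d - 2 Re α ≥ m‖z‖²`, hence
`|d - α|² = |α|² + d (d - 2 Re α) ≥ |α|² + m²‖z‖⁴`; with `|α| ≤ ‖L‖₂ ‖z‖²` this bounds
`|μ| = |α| / |d - α|` by `‖L‖₂ / √(‖L‖₂² + m²)`. The block-diagonal part of `G` is coercive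
with the same constant since its quadratic form is the sum of those of `G` on the blocks.
For entries bounded by `C₀` one has `‖L‖₂ ≤ C₀ n` and `m ≤ G i i ≤ C₀`, and then
`t / √(t² + m²) ≤ 1 - m² / (2 (t² + m²))` gives the last bound.
-/

open Matrix

section SpecNorm

variable {m n : Type*} [Fintype m] [Fintype n] [DecidableEq n]

lemma specNorm_nonneg (A : Matrix m n ℝ) : 0 ≤ specNorm A := norm_nonneg _

lemma norm_toLp_eq_sqrt {ι : Type*} [Fintype ι] (u : ι → ℝ) :
    ‖(WithLp.toLp 2 u : EuclideanSpace ℝ ι)‖ = √(∑ i, u i ^ 2) := by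
  simp [EuclideanSpace.norm_eq]

lemma toContinuousLinearMap_toEuclideanLin_toLp (A : Matrix m n ℝ) (u : n → ℝ) :
    LinearMap.toContinuousLinearMap (toEuclideanLin A) (WithLp.toLp 2 u) = WithLp.toLp 2 (A *ᵥ u) :=
  rfl

lemma sum_sq_mulVec_le (A : Matrix m n ℝ) (u : n → ℝ) :
    ∑ i, (A *ᵥ u) i ^ 2 ≤ specNorm A ^ 2 * ∑ j, u j ^ 2 := by
  have h := (LinearMap.toContinuousLinearMap (toEuclideanLin A)).le_opNorm (WithLp.toLp 2 u)
  rw [toContinuousLinearMap_toEuclideanLin_toLp, norm_toLp_eq_sqrt, norm_toLp_eq_sqrt, ← specNorm,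
    ← Real.sqrt_sq (specNorm_nonneg A), ← Real.sqrt_mul (sq_nonneg _)] at h
  exact (Real.sqrt_le_sqrt_iff (by positivity)).mp h

lemma specNorm_le_of_sum_sq_mulVec_le (A : Matrix m n ℝ) {C : ℝ} (hC : 0 ≤ C)
    (h : ∀ u, ∑ i, (A *ᵥ u) i ^ 2 ≤ C ^ 2 * ∑ j, u j ^ 2) : specNorm A ≤ C := by
  refine ContinuousLinearMap.opNorm_le_bound _ hC fun x => ?_
  obtain ⟨u, rfl⟩ : ∃ u, WithLp.toLp 2 u = x := ⟨x.ofLp, rfl⟩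
  rw [toContinuousLinearMap_toEuclideanLin_toLp, norm_toLp_eq_sqrt, norm_toLp_eq_sqrt,
    ← Real.sqrt_sq hC, ← Real.sqrt_mul (sq_nonneg _)]
  exact Real.sqrt_le_sqrt (h u)

lemma specNorm_le_of_abs_le (A : Matrix m n ℝ) {C : ℝ} (hC : 0 ≤ C) (h : ∀ i j, |A i j| ≤ C) :
    specNorm A ≤ √(Fintype.card m * Fintype.card n) * C := by
  refine specNorm_le_of_sum_sq_mulVec_le A (by positivity) fun u => ?_
  have hrow : ∀ i, ∑ j, A i j ^ 2 ≤ Fintype.card n * C ^ 2 := fun i => calc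
    ∑ j, A i j ^ 2 ≤ ∑ _j : n, C ^ 2 :=
      Finset.sum_le_sum fun j _ => by rw [← sq_abs]; gcongr; exact h i j
    _ = Fintype.card n * C ^ 2 := by simp
  calc ∑ i, (A *ᵥ u) i ^ 2 ≤ ∑ i, (∑ j, A i j ^ 2) * ∑ j, u j ^ 2 :=
        Finset.sum_le_sum fun i _ => Finset.sum_mul_sq_le_sq_mul_sq _ _ _
    _ ≤ ∑ _i : m, (Fintype.card n * C ^ 2) * ∑ j, u j ^ 2 :=
        Finset.sum_le_sum fun i _ => by gcongr; exact hrow i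
    _ = (√(Fintype.card m * Fintype.card n) * C) ^ 2 * ∑ j, u j ^ 2 := by
        rw [mul_pow, Real.sq_sqrt (by positivity)]; simp; ring

end SpecNorm

lemma norm_sq_add_sq_le_norm_ofReal_sub_sq {α : ℂ} {a d : ℝ} (ha : 0 ≤ a) (hd : a ≤ d)
    (hdα : a ≤ d - 2 * α.re) : ‖α‖ ^ 2 + a ^ 2 ≤ ‖(d : ℂ) - α‖ ^ 2 := by
  rw [Complex.sq_norm, Complex.sq_norm, Complex.normSq_apply, Complex.normSq_apply]
  simp only [Complex.sub_re, Complex.sub_im, Complex.ofReal_re, Complex.ofReal_im]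
  nlinarith [mul_le_mul hd hdα ha (ha.trans hd)]

lemma norm_le_div_sqrt_of_conj_eq_mul {α μ : ℂ} {d l m s : ℝ} (hm : 0 < m) (hs : 0 < s)
    (hα : ‖α‖ ≤ l * s) (hd : m * s ≤ d) (hdα : m * s ≤ d - 2 * α.re)
    (h : starRingEnd ℂ α = μ * (d - α)) : ‖μ‖ ≤ l / √(l ^ 2 + m ^ 2) := by
  have hl : 0 ≤ l := nonneg_of_mul_nonneg_left ((norm_nonneg α).trans hα) hs
  have hq := norm_sq_add_sq_le_norm_ofReal_sub_sq (by positivity) hd hdα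
  have hαμ : ‖α‖ = ‖μ‖ * ‖(d : ℂ) - α‖ := by simpa using congrArg norm h
  have hμ1 : ‖μ‖ ^ 2 ≤ 1 := by
    have : 0 < ‖(d : ℂ) - α‖ ^ 2 := by nlinarith [norm_nonneg α, mul_pos hm hs]
    nlinarith [norm_nonneg α]
  have key : ‖μ‖ ^ 2 * (l ^ 2 + m ^ 2) * s ^ 2 ≤ l ^ 2 * s ^ 2 := by
    have h1 : ‖μ‖ ^ 2 * (m * s) ^ 2 ≤ ‖α‖ ^ 2 * (1 - ‖μ‖ ^ 2) := by
      have : ‖α‖ ^ 2 = ‖μ‖ ^ 2 * ‖(d : ℂ) - α‖ ^ 2 := by rw [hαμ]; ring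
      nlinarith [mul_le_mul_of_nonneg_left hq (sq_nonneg ‖μ‖)]
    have h2 : ‖α‖ ^ 2 ≤ (l * s) ^ 2 := pow_le_pow_left₀ (norm_nonneg α) hα 2
    nlinarith [mul_le_mul_of_nonneg_right h2 (sub_nonneg.mpr hμ1)]
  have hS : 0 < √(l ^ 2 + m ^ 2) := Real.sqrt_pos.mpr (by positivity)
  rw [le_div_iff₀ hS]
  refine le_of_pow_le_pow_left₀ two_ne_zero hl ?_
  rw [mul_pow, Real.sq_sqrt (by positivity)]
  exact le_of_mul_le_mul_right key (by positivity)

lemma div_sqrt_sq_add_sq_le_one_sub (l : ℝ) {m : ℝ} (hm : m ≠ 0) :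
    l / √(l ^ 2 + m ^ 2) ≤ 1 - m ^ 2 / (2 * (l ^ 2 + m ^ 2)) := by
  have hX : 0 < l ^ 2 + m ^ 2 := by positivity
  set S := √(l ^ 2 + m ^ 2)
  have hS : 0 < S := Real.sqrt_pos.mpr hX
  have hS2 : S ^ 2 = l ^ 2 + m ^ 2 := Real.sq_sqrt hX.le
  rw [← hS2, div_le_iff₀ hS]
  field_simp
  nlinarith [sq_nonneg (S - l)]

lemma div_sqrt_sq_add_sq_le_one_sub_div_sq {l m C n : ℝ} (hm : 0 < m) (hl : 0 ≤ l)
    (hlC : l ≤ C * n) (hmC : m ≤ C) (hn : 1 ≤ n) :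
    l / √(l ^ 2 + m ^ 2) ≤ 1 - 1 / (4 * C ^ 2) * m ^ 2 / n ^ 2 := by
  refine (div_sqrt_sq_add_sq_le_one_sub l hm.ne').trans (sub_le_sub_left ?_ 1)
  have hC : 0 < C := hm.trans_le hmC
  have hsum : l ^ 2 + m ^ 2 ≤ 2 * C ^ 2 * n ^ 2 := by
    have hCn : C ^ 2 ≤ C ^ 2 * n ^ 2 := le_mul_of_one_le_right (sq_nonneg C) (one_le_pow₀ hn)
    nlinarith [pow_le_pow_left₀ hl hlC 2, pow_le_pow_left₀ hm.le hmC 2]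
  rw [div_mul_eq_mul_div, one_mul, div_div, div_le_div_iff_of_pos_left (by positivity)
    (by positivity) (by positivity)]
  linarith

namespace Matrix

lemma exists_mulVec_eq_smul_mulVec_of_mem_spectrum {K ι : Type*} [Field K] [Fintype ι]
    [DecidableEq ι] {X M A : Matrix ι ι K} (hM : IsUnit M) (hXM : X * M = A) {μ : K}
    (hμ : μ ∈ spectrum K X) : ∃ z ≠ 0, A *ᵥ z = μ • M *ᵥ z := by
  have hsing : ¬IsUnit (μ • M - A) := by
    rwa [← hXM, ← smul_one_mul, ← sub_mul, hM.mul_right_iff, ← Algebra.algebraMap_eq_smul_one,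
      ← spectrum.mem_iff]
  rw [isUnit_iff_isUnit_det, isUnit_iff_ne_zero, not_not, ← exists_mulVec_eq_zero_iff] at hsing
  obtain ⟨z, hz, hMz⟩ := hsing
  rw [sub_mulVec, smul_mulVec, sub_eq_zero] at hMz
  exact ⟨z, hz, hMz.symm⟩

/-- For symmetric `A` this is the paper's `λ_min(A) ≥ m`. -/
def IsCoerciveWith {ι : Type*} [Fintype ι] (A : Matrix ι ι ℝ) (m : ℝ) : Prop :=
  ∀ v : ι → ℝ, m * ∑ i, v i ^ 2 ≤ v ⬝ᵥ A *ᵥ v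

section Coercive

variable {ι : Type*} [Fintype ι]

lemma IsCoerciveWith.le_diag [DecidableEq ι] {A : Matrix ι ι ℝ} {m : ℝ} (hA : A.IsCoerciveWith m)
    (i : ι) : m ≤ A i i := by
  simpa [Pi.single_apply, apply_ite (· ^ 2)] using hA (Pi.single i 1)

lemma IsCoerciveWith.isUnit [DecidableEq ι] {A : Matrix ι ι ℝ} {m : ℝ} (hA : A.IsCoerciveWith m)
    (hm : 0 < m) : IsUnit A := by
  rw [isUnit_iff_isUnit_det, isUnit_iff_ne_zero]
  intro hdet
  obtain ⟨v, hv, hAv⟩ := exists_mulVec_eq_zero_iff.mpr hdet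
  obtain ⟨i, hi⟩ := Function.ne_iff.mp hv
  have hpos : 0 < ∑ j, v j ^ 2 :=
    Finset.sum_pos' (fun j _ => sq_nonneg _) ⟨i, Finset.mem_univ i, sq_pos_of_ne_zero hi⟩
  have := hA v
  rw [hAv, dotProduct_zero] at this
  nlinarith

lemma IsCoerciveWith.sub_of_sub_sub_transpose {D L : Matrix ι ι ℝ} {m : ℝ}
    (hD : D.IsCoerciveWith m) (hG : (D - L - Lᵀ).IsCoerciveWith m) : (D - L).IsCoerciveWith m := by
  intro v
  have hLt : v ⬝ᵥ Lᵀ *ᵥ v = v ⬝ᵥ L *ᵥ v := by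
    rw [dotProduct_mulVec, vecMul_transpose, dotProduct_comm]
  have := hG v
  simp only [sub_mulVec, dotProduct_sub, hLt] at this ⊢
  linarith [hD v]

end Coercive

section Complexification

variable {ι κ : Type*} [Fintype ι]

lemma sum_norm_sq_eq_sum_re_sq_add_sum_im_sq (z : ι → ℂ) :
    ∑ i, ‖z i‖ ^ 2 = ∑ i, (z i).re ^ 2 + ∑ i, (z i).im ^ 2 := by
  rw [← Finset.sum_add_distrib]
  exact Finset.sum_congr rfl fun i _ => by rw [Complex.sq_norm, Complex.normSq_apply]; ring

lemma re_map_ofReal_mulVec (P : Matrix κ ι ℝ) (z : ι → ℂ) (i : κ) :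
    ((P.map Complex.ofReal *ᵥ z) i).re = (P *ᵥ fun j => (z j).re) i := by
  simp [mulVec, dotProduct, Complex.re_sum]

lemma im_map_ofReal_mulVec (P : Matrix κ ι ℝ) (z : ι → ℂ) (i : κ) :
    ((P.map Complex.ofReal *ᵥ z) i).im = (P *ᵥ fun j => (z j).im) i := by
  simp [mulVec, dotProduct, Complex.im_sum]

lemma re_star_dotProduct_map_ofReal_mulVec (P : Matrix ι ι ℝ) (z : ι → ℂ) :
    (star z ⬝ᵥ P.map Complex.ofReal *ᵥ z).re
      = (fun j => (z j).re) ⬝ᵥ P *ᵥ (fun j => (z j).re)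
        + (fun j => (z j).im) ⬝ᵥ P *ᵥ (fun j => (z j).im) := by
  simp only [dotProduct, Complex.re_sum, Pi.star_apply, Complex.mul_re, Complex.star_def,
    Complex.conj_re, Complex.conj_im, re_map_ofReal_mulVec, im_map_ofReal_mulVec,
    ← Finset.sum_add_distrib]
  ring_nf

lemma star_dotProduct_transpose_map_ofReal_mulVec (P : Matrix ι ι ℝ) (z : ι → ℂ) :
    star z ⬝ᵥ Pᵀ.map Complex.ofReal *ᵥ z
      = starRingEnd ℂ (star z ⬝ᵥ P.map Complex.ofReal *ᵥ z) := by
  simp only [dotProduct, mulVec, map_sum, Finset.mul_sum]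
  rw [Finset.sum_comm]
  refine Finset.sum_congr rfl fun i _ => Finset.sum_congr rfl fun j _ => ?_
  simp only [transpose_apply, map_apply, Pi.star_apply, map_mul, Complex.conj_conj,
    Complex.conj_ofReal, Complex.star_def]
  ring

lemma IsCoerciveWith.le_re_star_dotProduct {P : Matrix ι ι ℝ} {m : ℝ} (hP : P.IsCoerciveWith m)
    (z : ι → ℂ) : m * ∑ i, ‖z i‖ ^ 2 ≤ (star z ⬝ᵥ P.map Complex.ofReal *ᵥ z).re := by
  rw [re_star_dotProduct_map_ofReal_mulVec, sum_norm_sq_eq_sum_re_sq_add_sum_im_sq, mul_add]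
  exact add_le_add (hP _) (hP _)

variable [DecidableEq ι]

lemma sum_norm_sq_map_ofReal_mulVec_le [Fintype κ] (P : Matrix κ ι ℝ) (z : ι → ℂ) :
    ∑ i, ‖(P.map Complex.ofReal *ᵥ z) i‖ ^ 2 ≤ specNorm P ^ 2 * ∑ j, ‖z j‖ ^ 2 := by
  rw [sum_norm_sq_eq_sum_re_sq_add_sum_im_sq, sum_norm_sq_eq_sum_re_sq_add_sum_im_sq, mul_add]
  simp only [re_map_ofReal_mulVec, im_map_ofReal_mulVec]
  exact add_le_add (sum_sq_mulVec_le P _) (sum_sq_mulVec_le P _)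

lemma norm_star_dotProduct_map_ofReal_mulVec_le (P : Matrix ι ι ℝ) (z : ι → ℂ) :
    ‖star z ⬝ᵥ P.map Complex.ofReal *ᵥ z‖ ≤ specNorm P * ∑ i, ‖z i‖ ^ 2 := by
  set w := P.map Complex.ofReal *ᵥ z
  calc ‖star z ⬝ᵥ w‖ ≤ ∑ i, ‖z i‖ * ‖w i‖ := by
        refine (norm_sum_le _ _).trans_eq (Finset.sum_congr rfl fun i _ => ?_)
        simp
    _ ≤ √(∑ i, ‖z i‖ ^ 2) * √(∑ i, ‖w i‖ ^ 2) := Real.sum_mul_le_sqrt_mul_sqrt _ _ _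
    _ ≤ √(∑ i, ‖z i‖ ^ 2) * √(specNorm P ^ 2 * ∑ i, ‖z i‖ ^ 2) := by
        gcongr; exact sum_norm_sq_map_ofReal_mulVec_le P z
    _ = specNorm P * ∑ i, ‖z i‖ ^ 2 := by
        rw [Real.sqrt_mul (sq_nonneg _), Real.sqrt_sq (specNorm_nonneg P), mul_left_comm,
          Real.mul_self_sqrt (by positivity)]

end Complexification

theorem norm_le_of_mem_spectrum_transpose_mul_inv {ι : Type*} [Fintype ι] [DecidableEq ι]
    {D L : Matrix ι ι ℝ} {m : ℝ} (hm : 0 < m) (hDs : D.IsSymm) (hD : D.IsCoerciveWith m)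
    (hG : (D - L - Lᵀ).IsCoerciveWith m) {μ : ℂ}
    (hμ : μ ∈ spectrum ℂ ((Lᵀ * (D - L)⁻¹).map Complex.ofReal)) :
    ‖μ‖ ≤ specNorm L / √(specNorm L ^ 2 + m ^ 2) := by
  have hunit : IsUnit (D - L) := (hD.sub_of_sub_sub_transpose hG).isUnit hm
  have hXM : (Lᵀ * (D - L)⁻¹).map Complex.ofReal * (D - L).map Complex.ofReal
      = Lᵀ.map Complex.ofReal := by
    have := (Matrix.map_mul (L := Lᵀ * (D - L)⁻¹) (M := D - L) (f := Complex.ofRealHom)).symm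
    rwa [nonsing_inv_mul_cancel_right _ _ ((isUnit_iff_isUnit_det _).mp hunit)] at this
  obtain ⟨z, hz, hLz⟩ := exists_mulVec_eq_smul_mulVec_of_mem_spectrum
    (M := (D - L).map Complex.ofReal) (hunit.map Complex.ofRealHom.mapMatrix) hXM hμ
  set α := star z ⬝ᵥ L.map Complex.ofReal *ᵥ z
  set d := star z ⬝ᵥ D.map Complex.ofReal *ᵥ z
  set s := ∑ i, ‖z i‖ ^ 2
  have hs : 0 < s := by
    obtain ⟨i, hi⟩ := Function.ne_iff.mp hz
    exact Finset.sum_pos' (fun j _ => sq_nonneg _)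
      ⟨i, Finset.mem_univ i, sq_pos_of_ne_zero (norm_ne_zero_iff.mpr hi)⟩
  have hd : (d.re : ℂ) = d := by
    refine Complex.conj_eq_iff_re.mp ?_
    rw [← star_dotProduct_transpose_map_ofReal_mulVec, hDs.eq]
  have hmap_sub : ∀ P Q : Matrix ι ι ℝ,
      (P - Q).map Complex.ofReal = P.map Complex.ofReal - Q.map Complex.ofReal :=
    Matrix.map_sub _ Complex.ofReal_sub
  have hconj : starRingEnd ℂ α = μ * (d.re - α) := by
    have := congrArg (star z ⬝ᵥ ·) hLz
    simp only [star_dotProduct_transpose_map_ofReal_mulVec, hmap_sub, sub_mulVec,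
      dotProduct_sub, dotProduct_smul, smul_eq_mul] at this
    rwa [hd]
  have hGre := hG.le_re_star_dotProduct z
  simp only [hmap_sub, sub_mulVec, dotProduct_sub, star_dotProduct_transpose_map_ofReal_mulVec,
    Complex.sub_re, Complex.conj_re] at hGre
  exact norm_le_div_sqrt_of_conj_eq_mul hm hs (norm_star_dotProduct_map_ofReal_mulVec_le L z)
    (hD.le_re_star_dotProduct z) (by linarith) hconj

section Blocks

variable {ι κ : Type*} [LinearOrder κ] (β : ι → κ)

def blockDiagPart (G : Matrix ι ι ℝ) : Matrix ι ι ℝ :=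
  of fun i j => if β i = β j then G i j else 0

def blockLowerPart (G : Matrix ι ι ℝ) : Matrix ι ι ℝ :=
  of fun i j => if β j < β i then -G i j else 0

variable {β}

lemma isSymm_blockDiagPart {G : Matrix ι ι ℝ} (hG : G.IsSymm) : (blockDiagPart β G).IsSymm := by
  ext i j
  simp [blockDiagPart, eq_comm, hG.apply]

lemma blockDiagPart_sub_blockLowerPart_sub_transpose {G : Matrix ι ι ℝ} (hG : G.IsSymm) :
    blockDiagPart β G - blockLowerPart β G - (blockLowerPart β G)ᵀ = G := by
  ext i j
  rcases lt_trichotomy (β i) (β j) with h | h | h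
  · simp [blockDiagPart, blockLowerPart, h, h.ne, h.not_gt, hG.apply]
  · simp [blockDiagPart, blockLowerPart, h]
  · simp [blockDiagPart, blockLowerPart, h, h.ne', h.not_gt]

lemma isCoerciveWith_blockDiagPart [Fintype ι] {G : Matrix ι ι ℝ} {m : ℝ}
    (hG : G.IsCoerciveWith m) : (blockDiagPart β G).IsCoerciveWith m := by
  intro v
  let blk (t : κ) : ι → ℝ := fun i => if β i = t then v i else 0
  have hsq : ∑ i, v i ^ 2 = ∑ t ∈ Finset.univ.image β, ∑ i, blk t i ^ 2 := by
    rw [Finset.sum_comm]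
    simp [blk, ite_pow]
  have hquad : v ⬝ᵥ blockDiagPart β G *ᵥ v
      = ∑ t ∈ Finset.univ.image β, blk t ⬝ᵥ G *ᵥ blk t := by
    simp only [dotProduct, mulVec, Finset.mul_sum]
    refine (Finset.sum_congr rfl fun i _ => ?_).trans Finset.sum_comm
    refine (Finset.sum_congr rfl fun j _ => ?_).trans Finset.sum_comm
    simp [blk, blockDiagPart, ite_mul, mul_ite, eq_comm]
  rw [hsq, hquad, Finset.mul_sum]
  exact Finset.sum_le_sum fun t _ => hG (blk t)

lemma abs_blockLowerPart_le {G : Matrix ι ι ℝ} {C : ℝ} (hC : 0 ≤ C) (hG : ∀ i j, |G i j| ≤ C)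
    (i j : ι) : |blockLowerPart β G i j| ≤ C := by
  by_cases h : β j < β i <;> simp [blockLowerPart, h, hG i j, hC]

end Blocks

end Matrix

/-- For a symmetric positive definite `G` with `λ_min(G) ≥ m > 0`,
partitioned into `k` consecutive blocks of size `b` (`n = bk`), with `D` its block-diagonal
part and `−L` its strictly block-lower-triangular part (`G = D − L − Lᵀ`), the matrix
`D − L` is invertible and every complex eigenvalue `λ` of `A = Lᵀ (D − L)⁻¹` satisfies
`|λ| ≤ ‖L‖₂ / √(‖L‖₂² + m²) < 1`. Moreover, if all entries of `G` are bounded by `C₀`,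
then `|λ| ≤ 1 − c m²/n²` for a constant `c > 0` depending only on `C₀`. -/
theorem gauss_seidel_spectral_radius (C₀ : ℝ) (hC₀ : 0 < C₀) :
    ∃ c : ℝ, 0 < c ∧
      ∀ (n b k : ℕ), n = b * k → 0 < b →
      ∀ (G : Matrix (Fin n) (Fin n) ℝ) (m : ℝ), 0 < m → G.IsSymm →
      (∀ v : Fin n → ℝ, m * ∑ i, v i ^ 2 ≤ v ⬝ᵥ G.mulVec v) →
      ∀ D L : Matrix (Fin n) (Fin n) ℝ,
        D = Matrix.of (fun (i j : Fin n) => if (i : ℕ) / b = (j : ℕ) / b then G i j else 0) →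
        L = Matrix.of (fun (i j : Fin n) => if (j : ℕ) / b < (i : ℕ) / b then -(G i j) else 0) →
        IsUnit (D - L) ∧
        (∀ lam ∈ spectrum ℂ ((Lᵀ * (D - L)⁻¹).map Complex.ofReal),
          ‖lam‖ ≤ specNorm L / Real.sqrt (specNorm L ^ 2 + m ^ 2) ∧
          ‖lam‖ < 1) ∧
        ((∀ i j, |G i j| ≤ C₀) →
          ∀ lam ∈ spectrum ℂ ((Lᵀ * (D - L)⁻¹).map Complex.ofReal),
            ‖lam‖ ≤ 1 - c * m ^ 2 / (n : ℝ) ^ 2) := by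
  refine ⟨1 / (4 * C₀ ^ 2), by positivity, ?_⟩
  intro n b k _ _ G m hm hGs hG D L hD hL
  let β : Fin n → ℕ := fun i => (i : ℕ) / b
  obtain rfl : D = blockDiagPart β G := hD
  obtain rfl : L = blockLowerPart β G := hL
  have hDc : (blockDiagPart β G).IsCoerciveWith m := isCoerciveWith_blockDiagPart hG
  have hGc : (blockDiagPart β G - blockLowerPart β G - (blockLowerPart β G)ᵀ).IsCoerciveWith m := by
    rwa [blockDiagPart_sub_blockLowerPart_sub_transpose hGs]
  have hspec := fun μ (hμ : μ ∈ _) =>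
    norm_le_of_mem_spectrum_transpose_mul_inv hm (isSymm_blockDiagPart hGs) hDc hGc hμ
  refine ⟨(hDc.sub_of_sub_sub_transpose hGc).isUnit hm, fun μ hμ => ⟨hspec μ hμ, ?_⟩, ?_⟩
  · exact (hspec μ hμ).trans_lt <| (div_sqrt_sq_add_sq_le_one_sub _ hm.ne').trans_lt <|
      sub_lt_self 1 (by positivity)
  intro hGC μ hμ
  obtain ⟨i⟩ : Nonempty (Fin n) := by
    by_contra h
    rw [not_nonempty_iff] at h
    simp [spectrum.of_subsingleton] at hμ
  have hL : specNorm (blockLowerPart β G) ≤ C₀ * n := by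
    simpa [mul_comm] using specNorm_le_of_abs_le _ hC₀.le (abs_blockLowerPart_le hC₀.le hGC)
  refine (hspec μ hμ).trans (div_sqrt_sq_add_sq_le_one_sub_div_sq hm (specNorm_nonneg _) hL
    ((IsCoerciveWith.le_diag hG i).trans ((le_abs_self _).trans (hGC i i))) ?_)
  exact_mod_cast Fin.pos_iff_nonempty.mpr ⟨i⟩
end

section
/- Let D ∈ ℝ^{n×n} be symmetric positive semidefinite, L ∈ ℝ^{n×n}, and suppose G = D − L − L^T is symmetric with λ_min(G) ≥ m > 0. Then for every v ∈ ℝⁿ, ‖(D − L) v‖₂ ≥ (m/2) ‖v‖₂; consequently D − L is invertible and ‖(D − L)^{-1}‖₂ ≤ 2/m. -/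
open Matrix

section EuclideanNorm

variable {ι : Type*} [Fintype ι]

lemma eNorm_eq_norm_toLp (v : ι → ℝ) : eNorm v = ‖WithLp.toLp 2 v‖ := by
  simp [eNorm, EuclideanSpace.norm_eq, sq_abs]

lemma sq_eNorm (v : ι → ℝ) : eNorm v ^ 2 = ∑ i, v i ^ 2 :=
  Real.sq_sqrt (by positivity)

lemma eNorm_nonneg_s16 (v : ι → ℝ) : 0 ≤ eNorm v :=
  Real.sqrt_nonneg _

@[simp]
lemma eNorm_zero : eNorm (0 : ι → ℝ) = 0 := by
  simp [eNorm]

lemma eNorm_eq_zero_iff {v : ι → ℝ} : eNorm v = 0 ↔ v = 0 := by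
  simp [eNorm_eq_norm_toLp]

lemma dotProduct_le_eNorm_mul_eNorm (v w : ι → ℝ) : v ⬝ᵥ w ≤ eNorm v * eNorm w := by
  simpa [eNorm_eq_norm_toLp, EuclideanSpace.inner_toLp_toLp, dotProduct_comm] using
    real_inner_le_norm (WithLp.toLp 2 v) (WithLp.toLp 2 w)

lemma mul_eNorm_le_eNorm_mulVec_of_coercive {A : Matrix ι ι ℝ} {c : ℝ}
    (hA : ∀ v, c * ∑ i, v i ^ 2 ≤ v ⬝ᵥ A *ᵥ v) (v : ι → ℝ) : c * eNorm v ≤ eNorm (A *ᵥ v) := by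
  rcases (eNorm_nonneg_s16 v).eq_or_lt with hv | hv
  · simpa [← hv] using eNorm_nonneg_s16 (A *ᵥ v)
  · refine le_of_mul_le_mul_right ?_ hv
    calc c * eNorm v * eNorm v = c * ∑ i, v i ^ 2 := by rw [mul_assoc, ← sq, sq_eNorm]
      _ ≤ v ⬝ᵥ A *ᵥ v := hA v
      _ ≤ eNorm v * eNorm (A *ᵥ v) := dotProduct_le_eNorm_mul_eNorm _ _
      _ = eNorm (A *ᵥ v) * eNorm v := mul_comm _ _

variable [DecidableEq ι] {A : Matrix ι ι ℝ} {c : ℝ}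

lemma isUnit_of_mul_eNorm_le_eNorm_mulVec (hc : 0 < c)
    (hA : ∀ v, c * eNorm v ≤ eNorm (A *ᵥ v)) : IsUnit A := by
  rw [← mulVec_injective_iff_isUnit]
  intro a b hab
  have hzero : c * eNorm (a - b) ≤ 0 := by
    simpa [mulVec_sub, hab] using hA (a - b)
  have : eNorm (a - b) = 0 :=
    le_antisymm (nonpos_of_mul_nonpos_right hzero hc) (eNorm_nonneg_s16 _)
  exact sub_eq_zero.mp (eNorm_eq_zero_iff.mp this)

lemma specNorm_inv_le_of_mul_eNorm_le_eNorm_mulVec (hc : 0 < c)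
    (hA : ∀ v, c * eNorm v ≤ eNorm (A *ᵥ v)) : specNorm A⁻¹ ≤ c⁻¹ := by
  have hdet : IsUnit A.det :=
    (isUnit_iff_isUnit_det A).mp (isUnit_of_mul_eNorm_le_eNorm_mulVec hc hA)
  refine ContinuousLinearMap.opNorm_le_bound _ (inv_nonneg.mpr hc.le) fun x => ?_
  obtain ⟨w, rfl⟩ : ∃ w, WithLp.toLp 2 w = x := ⟨x.ofLp, rfl⟩
  have hsolve : A *ᵥ (A⁻¹ *ᵥ w) = w := by
    rw [mulVec_mulVec, mul_nonsing_inv A hdet, one_mulVec]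
  have hbound : c * eNorm (A⁻¹ *ᵥ w) ≤ eNorm w := by
    simpa only [hsolve] using hA (A⁻¹ *ᵥ w)
  simpa [← eNorm_eq_norm_toLp] using (le_inv_mul_iff₀ hc).mpr hbound

end EuclideanNorm

lemma two_mul_dotProduct_sub_mulVec {ι R : Type*} [Fintype ι] [CommRing R]
    (D L : Matrix ι ι R) (v : ι → R) :
    2 * (v ⬝ᵥ (D - L) *ᵥ v) = v ⬝ᵥ D *ᵥ v + v ⬝ᵥ (D - L - Lᵀ) *ᵥ v := by
  have hLt : v ⬝ᵥ Lᵀ *ᵥ v = v ⬝ᵥ L *ᵥ v := by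
    rw [dotProduct_mulVec, vecMul_transpose, dotProduct_comm]
  simp only [sub_mulVec, dotProduct_sub, hLt]
  ring

lemma half_coercive_sub_of_posSemidef {ι : Type*} [Fintype ι] {D L : Matrix ι ι ℝ} {m : ℝ}
    (hD : D.PosSemidef) (hmin : ∀ v : ι → ℝ, m * ∑ i, v i ^ 2 ≤ v ⬝ᵥ (D - L - Lᵀ) *ᵥ v)
    (v : ι → ℝ) : m / 2 * ∑ i, v i ^ 2 ≤ v ⬝ᵥ (D - L) *ᵥ v := by
  have hDv : 0 ≤ v ⬝ᵥ D *ᵥ v := by simpa using hD.dotProduct_mulVec_nonneg v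
  linarith [two_mul_dotProduct_sub_mulVec D L v, hmin v]

theorem gauss_seidel_factor_lower_bound_general {n : ℕ}
    (D L G : Matrix (Fin n) (Fin n) ℝ) (m : ℝ) (hm : 0 < m)
    (hD : D.PosSemidef) (hG : G = D - L - Lᵀ)
    (hmin : ∀ v : Fin n → ℝ, m * ∑ i, v i ^ 2 ≤ v ⬝ᵥ G.mulVec v) :
    (∀ v : Fin n → ℝ, (m / 2) * eNorm v ≤ eNorm ((D - L).mulVec v)) ∧
    IsUnit (D - L) ∧ specNorm (D - L)⁻¹ ≤ 2 / m := by
  subst hG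
  have hbound := mul_eNorm_le_eNorm_mulVec_of_coercive (half_coercive_sub_of_posSemidef hD hmin)
  have hm2 : 0 < m / 2 := half_pos hm
  refine ⟨hbound, isUnit_of_mul_eNorm_le_eNorm_mulVec hm2 hbound, ?_⟩
  simpa using specNorm_inv_le_of_mul_eNorm_le_eNorm_mulVec hm2 hbound

/-- If `D` is symmetric positive semidefinite and `G = D − L − Lᵀ` is
symmetric with least eigenvalue at least `m > 0`, then `‖(D − L)v‖₂ ≥ (m/2)‖v‖₂` for all `v`;
consequently `D − L` is invertible and `‖(D − L)⁻¹‖₂ ≤ 2/m`. -/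
theorem gauss_seidel_factor_lower_bound {n : ℕ}
    (D L G : Matrix (Fin n) (Fin n) ℝ) (m : ℝ) (hm : 0 < m)
    (hD : D.PosSemidef) (hG : G = D - L - Lᵀ) (hGsymm : G.IsSymm)
    (hmin : ∀ v : Fin n → ℝ, m * ∑ i, v i ^ 2 ≤ v ⬝ᵥ G.mulVec v) :
    (∀ v : Fin n → ℝ, (m / 2) * eNorm v ≤ eNorm ((D - L).mulVec v)) ∧
    IsUnit (D - L) ∧ specNorm (D - L)⁻¹ ≤ 2 / m :=
  gauss_seidel_factor_lower_bound_general D L G m hm hD hG hmin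
end
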